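/- Let d(j, k) denote the coefficient of y^j in p_k(y), and set c(j, η) = (-1)^(η+1) (2η + 3) / (η! (j - η)!) for 0 ≤ η ≤ j. Then for all integers k ≥ 1 and 0 ≤ j ≤ k, d(j, k) = ∑_{η=0}^{j} c(j, η) (4η + 5)^(k-1); moreover, for all integers j > k ≥ 1, ∑_{η=0}^{j} c(j, η) (4η + 5)^(k-1) = 0. -/

import Mathlib

/-!
Both sides satisfy the recurrence `d(j, n+1) = (4j + 5) d(j, n) - 4 d(j-1, n)` read off from the
definition of the `p_k`; for the sums this is the identity `(j + 1 - η) c(j+1, η) = c(j, η)`.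
Up to the factor `-1/j!`, `∑_η c(j, η) Q(η)` is the `j`-th forward difference of `(2x + 3) Q(x)`
at `0`, so it vanishes whenever `deg Q + 1 < j`. With `Q = 1` this settles the base case `k = 1`,
and with `Q = (4x + 5)^(k-1)` it is the second claim.
-/

open Polynomial

/-- The Csordas–Varga polynomials: `cv n` is `p_{n+1}`, where `p_1(y) = 2y - 3` and
`p_{k+1}(y) = 4y p_k'(y) + (5 - 4y) p_k(y)`. -/
noncomputable def cv : ℕ → Polynomial ℝ
  | 0 => 2 * X - 3
  | (n+1) => 4 * X * (derivative (cv n)) + (5 - 4 * X) * (cv n)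

/-- `c(j, η) = (-1)^(η+1) (2η + 3) / (η! (j - η)!)`. -/
noncomputable def c (j η : ℕ) : ℝ :=
  (-1)^(η+1) * (2*η + 3) / (η.factorial * (j - η).factorial)

open Finset

theorem Polynomial.sum_range_neg_one_pow_mul_choose_mul_eval_eq_zero {R : Type*} [CommRing R]
    (P : R[X]) {n : ℕ} (hP : P.natDegree < n) :
    ∑ k ∈ range (n + 1), (-1) ^ k * n.choose k * P.eval (k : R) = 0 := by
  have h := congr_fun (fwdDiff_iter_eq_zero_of_degree_lt hP) 0
  rw [fwdDiff_iter_eq_sum_shift] at h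
  have hscaled := congr_arg ((-1 : R) ^ n * ·) h
  simp only [Pi.zero_apply, mul_zero, mul_sum] at hscaled
  rw [← hscaled]
  refine sum_congr rfl fun k hk => ?_
  obtain ⟨m, rfl⟩ := Nat.exists_eq_add_of_le (Nat.lt_succ_iff.mp (mem_range.mp hk))
  simp [pow_add, zsmul_eq_mul, ← mul_assoc, mul_comm _ ((-1 : R) ^ m), ← mul_pow]

lemma c_mul_factorial {j η : ℕ} (h : η ≤ j) :
    c j η * j.factorial = -((-1) ^ η * j.choose η * (2 * η + 3)) := by
  rw [c, ← Nat.choose_mul_factorial_mul_factorial h]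
  push_cast
  field_simp
  ring

lemma sum_c_mul_eval_eq_zero (Q : ℝ[X]) {j : ℕ} (hQ : Q.natDegree + 1 < j) :
    ∑ η ∈ range (j + 1), c j η * Q.eval (η : ℝ) = 0 := by
  have hdeg : ((2 * X + 3) * Q).natDegree < j := by
    have : (2 * X + 3 : ℝ[X]).natDegree ≤ 1 := by compute_degree
    have := natDegree_mul_le (p := 2 * X + 3) (q := Q)
    omega
  have hterm : ∀ η ∈ range (j + 1), c j η * Q.eval (η : ℝ) * j.factorial
      = -((-1) ^ η * j.choose η * ((2 * X + 3) * Q).eval (η : ℝ)) := fun η hη => by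
    rw [mul_right_comm, c_mul_factorial (Nat.lt_succ_iff.mp (mem_range.mp hη))]
    simp only [eval_mul, eval_add, eval_ofNat, eval_X]
    ring
  have hfac : (j.factorial : ℝ) ≠ 0 := by positivity
  rw [← mul_eq_zero_iff_right hfac, sum_mul, sum_congr rfl hterm, sum_neg_distrib,
    sum_range_neg_one_pow_mul_choose_mul_eval_eq_zero _ hdeg, neg_zero]

lemma c_succ_mul {j η : ℕ} (h : η ≤ j) : c (j + 1) η * (j + 1 - η) = c j η := by
  have hgap : (j + 1 - η : ℝ) = ((j - η : ℕ) : ℝ) + 1 := by rw [Nat.cast_sub h]; ring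
  rw [hgap, c, c, Nat.succ_sub h, Nat.factorial_succ]
  push_cast
  field_simp

noncomputable def cvCoeffSum (j n : ℕ) : ℝ := ∑ η ∈ range (j + 1), c j η * (4 * η + 5) ^ n

lemma cvCoeffSum_zero_succ (n : ℕ) : cvCoeffSum 0 (n + 1) = 5 * cvCoeffSum 0 n := by
  simp [cvCoeffSum, pow_succ', mul_left_comm]

lemma cvCoeffSum_succ_succ (j n : ℕ) :
    cvCoeffSum (j + 1) (n + 1) = (4 * (j + 1) + 5) * cvCoeffSum (j + 1) n - 4 * cvCoeffSum j n := by
  have hsplit : ∀ η ∈ range (j + 2), c (j + 1) η * (4 * η + 5) ^ (n + 1)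
      = (4 * (j + 1) + 5) * (c (j + 1) η * (4 * η + 5) ^ n)
        - 4 * (c (j + 1) η * (j + 1 - η) * (4 * η + 5) ^ n) := fun η _ => by
    ring
  have hlower : ∑ η ∈ range (j + 2), c (j + 1) η * (j + 1 - η) * (4 * η + 5) ^ n
      = cvCoeffSum j n := by
    rw [sum_range_succ, cvCoeffSum]
    push_cast
    rw [sub_self, mul_zero, zero_mul, add_zero]
    exact sum_congr rfl fun η hη => by rw [c_succ_mul (Nat.lt_succ_iff.mp (mem_range.mp hη))]
  rw [cvCoeffSum, sum_congr rfl hsplit, sum_sub_distrib, ← mul_sum, ← mul_sum, hlower]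
  rfl

lemma coeff_cv_succ_zero (n : ℕ) : (cv (n + 1)).coeff 0 = 5 * (cv n).coeff 0 := by
  simp [cv, mul_assoc, sub_mul, coeff_sub, mul_coeff_zero]

lemma coeff_cv_succ_succ (n j : ℕ) :
    (cv (n + 1)).coeff (j + 1) = (4 * (j + 1) + 5) * (cv n).coeff (j + 1) - 4 * (cv n).coeff j := by
  simp [cv, mul_assoc, mul_left_comm _ X, sub_mul, coeff_sub, coeff_derivative]
  ring

lemma coeff_cv_zero (j : ℕ) : (cv 0).coeff j = cvCoeffSum j 0 := by
  match j with
  | 0 => simp [cv, cvCoeffSum, c]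
  | 1 => simp [cv, cvCoeffSum, c, sum_range_succ]
  | j + 2 =>
    have hcoeff : (cv 0).coeff (j + 2) = 0 := by simp [cv, coeff_X]
    simpa [hcoeff, cvCoeffSum] using (sum_c_mul_eval_eq_zero 1 (j := j + 2) (by simp)).symm

theorem coeff_cv (n j : ℕ) : (cv n).coeff j = cvCoeffSum j n := by
  induction n generalizing j with
  | zero => exact coeff_cv_zero j
  | succ n ih =>
    cases j with
    | zero => rw [coeff_cv_succ_zero, cvCoeffSum_zero_succ, ih]
    | succ j => rw [coeff_cv_succ_succ, cvCoeffSum_succ_succ, ih, ih]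

theorem stmt_11 :
    (∀ k : ℕ, 1 ≤ k → ∀ j : ℕ, j ≤ k →
      (cv (k-1)).coeff j = ∑ η ∈ Finset.range (j+1), c j η * (4*η + 5)^(k-1)) ∧
    (∀ k j : ℕ, 1 ≤ k → k < j →
      ∑ η ∈ Finset.range (j+1), c j η * (4*η + 5)^(k-1) = 0) := by
  refine ⟨fun k _ j _ => coeff_cv (k - 1) j, fun k j hk hkj => ?_⟩
  have hdeg : ((4 * X + 5 : ℝ[X]) ^ (k - 1)).natDegree ≤ k - 1 := by compute_degree
  rw [← sum_c_mul_eval_eq_zero ((4 * X + 5 : ℝ[X]) ^ (k - 1)) (j := j) (by omega)]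
  exact sum_congr rfl fun η _ => by simp
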